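/- Let η, ρ be real constants and let F(u, w, w̃) be a smooth real-valued function on an open set U ⊆ ℝ³. Define the linearization of equation (EWred) at F as the linear operator L_F(δ) := (η δ_{w̃} + δ_{uw̃})(η F_w − F_{uw}) + (η F_{w̃} + F_{uw̃})(η δ_w − δ_{uw}) − (η² δ − δ_{uu}) F_{ww̃} − (η² F − F_{uu}) δ_{ww̃}, acting on smooth functions δ(u, w, w̃). Then: (i) L_F(e^{−ηu}) = 0 on U for every smooth F (whether or not F solves (EWred)); and (ii) if F satisfies (EWred) on U, then L_F(F_w) = 0 and L_F(F_{w̃}) = 0 on U. -/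

import Mathlib

noncomputable section

/-- Partial derivatives of a function of (u, w, w̃) in its three arguments. -/
def pu (F : ℝ → ℝ → ℝ → ℝ) : ℝ → ℝ → ℝ → ℝ := fun u w wt => deriv (fun s => F s w wt) u
def pw (F : ℝ → ℝ → ℝ → ℝ) : ℝ → ℝ → ℝ → ℝ := fun u w wt => deriv (fun s => F u s wt) w
def pwt (F : ℝ → ℝ → ℝ → ℝ) : ℝ → ℝ → ℝ → ℝ := fun u w wt => deriv (fun s => F u w s) wt

/-- Equation (EWred). -/
def EWred (η ρ : ℝ) (F : ℝ → ℝ → ℝ → ℝ) (u w wt : ℝ) : Prop :=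
  (η * pwt F u w wt + pwt (pu F) u w wt) * (η * pw F u w wt - pw (pu F) u w wt)
    - (η ^ 2 * F u w wt - pu (pu F) u w wt) * pwt (pw F) u w wt
    = 4 * Real.exp (2 * ρ * u)

/-- The linearization L_F(δ) of equation (EWred) at F. -/
def linEWred (η : ℝ) (F δ : ℝ → ℝ → ℝ → ℝ) (u w wt : ℝ) : ℝ :=
  (η * pwt δ u w wt + pwt (pu δ) u w wt) * (η * pw F u w wt - pw (pu F) u w wt)
    + (η * pwt F u w wt + pwt (pu F) u w wt) * (η * pw δ u w wt - pw (pu δ) u w wt)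
    - (η ^ 2 * δ u w wt - pu (pu δ) u w wt) * pwt (pw F) u w wt
    - (η ^ 2 * F u w wt - pu (pu F) u w wt) * pwt (pw δ) u w wt

/-!
Mixed partial derivatives of a smooth function commute, so differentiating the left-hand side
of (EWred) along any direction `v` of `ℝ³` gives `L_F(∂_v F)`. If `F` solves (EWred) on `U`, that
left-hand side equals `4 e^{2ρu}`, which does not depend on `w` or `w̃`; hence `L_F(F_w)` and
`L_F(F_w̃)` vanish. For `δ = φ(u)` only the term `-(η² δ - δ_uu) F_{ww̃}` of `L_F(δ)` survives,
and it vanishes when `φ'' = η² φ`, e.g. for `φ(u) = e^{-ηu}`.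
-/

open scoped ContDiff
open Set Filter Topology

section PartialDeriv

variable {E : Type*} [NormedAddCommGroup E] [NormedSpace ℝ E] {U : Set E} {f g : E → ℝ} {p : E}

def partialDeriv (v : E) (f : E → ℝ) : E → ℝ := fun q => fderiv ℝ f q v

theorem ContDiffOn.partialDeriv (hU : IsOpen U) (hf : ContDiffOn ℝ ∞ f U) (v : E) :
    ContDiffOn ℝ ∞ (partialDeriv v f) U :=
  (hf.fderiv_of_isOpen (m := ∞) hU (by simp)).clm_apply contDiffOn_const

theorem ContDiffOn.differentiableAt_of_isOpen {F : Type*} [NormedAddCommGroup F] [NormedSpace ℝ F]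
    {f : E → F} (hU : IsOpen U) (hf : ContDiffOn ℝ ∞ f U) (hp : p ∈ U) : DifferentiableAt ℝ f p :=
  (hf.contDiffAt (hU.mem_nhds hp)).differentiableAt (by simp)

theorem partialDeriv_congr (hU : IsOpen U) (h : EqOn f g U) (v : E) :
    EqOn (partialDeriv v f) (partialDeriv v g) U := fun _ hq => by
  simp only [partialDeriv, (h.eventuallyEq_of_mem (hU.mem_nhds hq)).fderiv_eq]

theorem partialDeriv_comm (hU : IsOpen U) (hf : ContDiffOn ℝ ∞ f U) (hp : p ∈ U) (v w : E) :
    partialDeriv v (partialDeriv w f) p = partialDeriv w (partialDeriv v f) p := by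
  have hf' := hf.fderiv_of_isOpen (m := ∞) hU (by simp)
  have hd : ∀ u, fderiv ℝ (partialDeriv u f) p = (fderiv ℝ (fderiv ℝ f) p).flip u := fun u => by
    change fderiv ℝ (fun q => fderiv ℝ f q u) p = _
    rw [fderiv_clm_apply (hf'.differentiableAt_of_isOpen hU hp)
      (differentiableAt_const u), fderiv_const_apply]
    simp
  simp only [partialDeriv, hd, ContinuousLinearMap.flip_apply]
  exact ((hf.contDiffAt (hU.mem_nhds hp)).isSymmSndFDerivAt
    (by rw [minSmoothness_of_isRCLikeNormedField]; exact WithTop.coe_le_coe.2 le_top) v w)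

theorem partialDeriv_rotate (hU : IsOpen U) (hf : ContDiffOn ℝ ∞ f U) (hp : p ∈ U) (a b c : E) :
    partialDeriv a (partialDeriv b (partialDeriv c f)) p
      = partialDeriv b (partialDeriv c (partialDeriv a f)) p := by
  rw [partialDeriv_comm hU (hf.partialDeriv hU c) hp,
    partialDeriv_congr hU (fun q hq => partialDeriv_comm hU hf hq a c) b hp]

theorem hasDerivAt_partialDeriv (hf : DifferentiableAt ℝ f p) (v : E) :
    HasDerivAt (fun t : ℝ => f (p + t • v)) (partialDeriv v f p) 0 :=
  hf.hasFDerivAt.hasLineDerivAt v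

theorem deriv_eq_partialDeriv {φ : ℝ → ℝ} {γ : ℝ → E} {v : E} {t : ℝ} (hU : IsOpen U)
    (hγ : HasDerivAt γ v t) (ht : γ t ∈ U) (hg : DifferentiableAt ℝ g (γ t))
    (hφ : ∀ s, γ s ∈ U → φ s = g (γ s)) : deriv φ t = partialDeriv v g (γ t) := by
  refine ((hg.hasFDerivAt.comp_hasDerivAt t hγ).congr_of_eventuallyEq ?_).deriv
  filter_upwards [hγ.continuousAt.preimage_mem_nhds (hU.mem_nhds ht)] with s hs using hφ s hs

end PartialDeriv

local notation "∂[" v "]" => partialDeriv v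

def eU : ℝ × ℝ × ℝ := (1, 0, 0)
def eW : ℝ × ℝ × ℝ := (0, 1, 0)
def eWt : ℝ × ℝ × ℝ := (0, 0, 1)

-- The left-hand side of (EWred) and the operator `L_f(d)`, for functions on `ℝ³`.
def ewLHS (η : ℝ) (f : ℝ × ℝ × ℝ → ℝ) (q : ℝ × ℝ × ℝ) : ℝ :=
  (η * ∂[eWt] f q + ∂[eWt] (∂[eU] f) q) * (η * ∂[eW] f q - ∂[eW] (∂[eU] f) q)
    - (η ^ 2 * f q - ∂[eU] (∂[eU] f) q) * ∂[eWt] (∂[eW] f) q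

def ewLin (η : ℝ) (f d : ℝ × ℝ × ℝ → ℝ) (q : ℝ × ℝ × ℝ) : ℝ :=
  (η * ∂[eWt] d q + ∂[eWt] (∂[eU] d) q) * (η * ∂[eW] f q - ∂[eW] (∂[eU] f) q)
    + (η * ∂[eWt] f q + ∂[eWt] (∂[eU] f) q) * (η * ∂[eW] d q - ∂[eW] (∂[eU] d) q)
    - (η ^ 2 * d q - ∂[eU] (∂[eU] d) q) * ∂[eWt] (∂[eW] f) q
    - (η ^ 2 * f q - ∂[eU] (∂[eU] f) q) * ∂[eWt] (∂[eW] d) q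

section EWCore

variable {U : Set (ℝ × ℝ × ℝ)} {f : ℝ × ℝ × ℝ → ℝ} {p : ℝ × ℝ × ℝ}

theorem hasDerivAt_ewLHS (η : ℝ) (hU : IsOpen U) (hf : ContDiffOn ℝ ∞ f U) (hp : p ∈ U)
    (v : ℝ × ℝ × ℝ) :
    HasDerivAt (fun t : ℝ => ewLHS η f (p + t • v)) (ewLin η f (∂[v] f) p) 0 := by
  have D {g} (hg : ContDiffOn ℝ ∞ g U) : HasDerivAt (fun t : ℝ => g (p + t • v)) (∂[v] g p) 0 :=
    hasDerivAt_partialDeriv (hg.differentiableAt_of_isOpen hU hp) v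
  have hf' := hf.partialDeriv hU
  have H := ((((D (hf' eWt)).const_mul η).add (D ((hf' eU).partialDeriv hU eWt))).mul
      (((D (hf' eW)).const_mul η).sub (D ((hf' eU).partialDeriv hU eW)))).sub
    ((((D hf).const_mul (η ^ 2)).sub (D ((hf' eU).partialDeriv hU eU))).mul
      (D ((hf' eW).partialDeriv hU eWt)))
  simp only [Pi.add_apply, Pi.sub_apply, zero_smul, add_zero] at H
  rw [partialDeriv_comm hU hf hp v eWt, partialDeriv_comm hU hf hp v eW,
    partialDeriv_rotate hU hf hp v eWt eU, partialDeriv_rotate hU hf hp v eW eU,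
    partialDeriv_rotate hU hf hp v eU eU, partialDeriv_rotate hU hf hp v eWt eW] at H
  refine H.congr_deriv ?_
  rw [ewLin]
  ring

theorem ewLin_partialDeriv_eq_zero (η : ℝ) {φ : ℝ → ℝ} (hU : IsOpen U) (hf : ContDiffOn ℝ ∞ f U)
    (hEW : ∀ q ∈ U, ewLHS η f q = φ q.1) (hp : p ∈ U) {v : ℝ × ℝ × ℝ} (hv : v.1 = 0) :
    ewLin η f (∂[v] f) p = 0 := by
  have hline : ∀ᶠ t : ℝ in 𝓝 0, p + t • v ∈ U :=
    (continuous_const.add (continuous_id.smul continuous_const)).continuousAt.preimage_mem_nhds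
      (by simpa using hU.mem_nhds hp)
  have hconst : (fun t : ℝ => ewLHS η f (p + t • v)) =ᶠ[𝓝 0] fun _ => φ p.1 := by
    filter_upwards [hline] with t ht
    simp [hEW _ ht, hv]
  exact (hasDerivAt_ewLHS η hU hf hp v).unique ((hasDerivAt_const 0 _).congr_of_eventuallyEq hconst)

end EWCore

/-- The partials `pu`, `pw`, `pwt` are derivatives of one-variable slices; on the open set `U`
they are read off from the Fréchet partials of a smooth function `g` on `ℝ³` that agrees with `G`
there. -/
structure SmoothReprOn (U : Set (ℝ × ℝ × ℝ)) (G : ℝ → ℝ → ℝ → ℝ) (g : ℝ × ℝ × ℝ → ℝ) :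
    Prop where
  contDiffOn : ContDiffOn ℝ ∞ g U
  eq : ∀ p ∈ U, G p.1 p.2.1 p.2.2 = g p

namespace SmoothReprOn

variable {U : Set (ℝ × ℝ × ℝ)} {G : ℝ → ℝ → ℝ → ℝ} {g : ℝ × ℝ × ℝ → ℝ}

theorem pu (hU : IsOpen U) (h : SmoothReprOn U G g) : SmoothReprOn U (_root_.pu G) (∂[eU] g) :=
  ⟨h.contDiffOn.partialDeriv hU eU, fun p hp => deriv_eq_partialDeriv hU
    ((hasDerivAt_id p.1).prodMk ((hasDerivAt_const _ p.2.1).prodMk (hasDerivAt_const _ p.2.2)))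
    hp (h.contDiffOn.differentiableAt_of_isOpen hU hp) fun _ hs => h.eq _ hs⟩

theorem pw (hU : IsOpen U) (h : SmoothReprOn U G g) : SmoothReprOn U (_root_.pw G) (∂[eW] g) :=
  ⟨h.contDiffOn.partialDeriv hU eW, fun p hp => deriv_eq_partialDeriv hU
    ((hasDerivAt_const _ p.1).prodMk ((hasDerivAt_id p.2.1).prodMk (hasDerivAt_const _ p.2.2)))
    hp (h.contDiffOn.differentiableAt_of_isOpen hU hp) fun _ hs => h.eq _ hs⟩

theorem pwt (hU : IsOpen U) (h : SmoothReprOn U G g) : SmoothReprOn U (_root_.pwt G) (∂[eWt] g) :=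
  ⟨h.contDiffOn.partialDeriv hU eWt, fun p hp => deriv_eq_partialDeriv hU
    ((hasDerivAt_const _ p.1).prodMk ((hasDerivAt_const _ p.2.1).prodMk (hasDerivAt_id p.2.2)))
    hp (h.contDiffOn.differentiableAt_of_isOpen hU hp) fun _ hs => h.eq _ hs⟩

variable {η : ℝ} {F δ : ℝ → ℝ → ℝ → ℝ} {f d : ℝ × ℝ × ℝ → ℝ} {p : ℝ × ℝ × ℝ}

theorem linEWred_eq (hU : IsOpen U) (hF : SmoothReprOn U F f) (hδ : SmoothReprOn U δ d)
    (hp : p ∈ U) : linEWred η F δ p.1 p.2.1 p.2.2 = ewLin η f d p := by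
  simp only [linEWred, ewLin, hF.eq p hp, (hF.pw hU).eq p hp, (hF.pwt hU).eq p hp,
    ((hF.pu hU).pu hU).eq p hp, ((hF.pu hU).pw hU).eq p hp, ((hF.pu hU).pwt hU).eq p hp,
    ((hF.pw hU).pwt hU).eq p hp, hδ.eq p hp, (hδ.pw hU).eq p hp, (hδ.pwt hU).eq p hp,
    ((hδ.pu hU).pu hU).eq p hp, ((hδ.pu hU).pw hU).eq p hp, ((hδ.pu hU).pwt hU).eq p hp,
    ((hδ.pw hU).pwt hU).eq p hp]

theorem EWred_iff (ρ : ℝ) (hU : IsOpen U) (hF : SmoothReprOn U F f) (hp : p ∈ U) :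
    EWred η ρ F p.1 p.2.1 p.2.2 ↔ ewLHS η f p = 4 * Real.exp (2 * ρ * p.1) := by
  simp only [EWred, ewLHS, hF.eq p hp, (hF.pw hU).eq p hp, (hF.pwt hU).eq p hp,
    ((hF.pu hU).pu hU).eq p hp, ((hF.pu hU).pw hU).eq p hp, ((hF.pu hU).pwt hU).eq p hp,
    ((hF.pw hU).pwt hU).eq p hp]

end SmoothReprOn

theorem linEWred_eq_zero_of_deriv_deriv {η : ℝ} {φ : ℝ → ℝ}
    (hφ : ∀ u, deriv (deriv φ) u = η ^ 2 * φ u) (F : ℝ → ℝ → ℝ → ℝ) (u w wt : ℝ) :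
    linEWred η F (fun u _ _ => φ u) u w wt = 0 := by
  simp [linEWred, pu, pw, pwt, hφ]

/-- (i) L_F(e^{−ηu}) = 0 on U for every smooth F; and
(ii) if F solves (EWred) on U then L_F(F_w) = 0 and L_F(F_{w̃}) = 0 on U. -/
theorem linearised_EWred_solutions (η ρ : ℝ)
    (U : Set (ℝ × ℝ × ℝ)) (hU : IsOpen U)
    (F : ℝ → ℝ → ℝ → ℝ)
    (hF : ContDiffOn ℝ (⊤ : ℕ∞) (fun p : ℝ × ℝ × ℝ => F p.1 p.2.1 p.2.2) U) :
    (∀ p ∈ U, linEWred η F (fun u _ _ => Real.exp (-η * u)) p.1 p.2.1 p.2.2 = 0)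
    ∧ ((∀ p ∈ U, EWred η ρ F p.1 p.2.1 p.2.2) →
        (∀ p ∈ U, linEWred η F (pw F) p.1 p.2.1 p.2.2 = 0
          ∧ linEWred η F (pwt F) p.1 p.2.1 p.2.2 = 0)) := by
  refine ⟨fun p _ => linEWred_eq_zero_of_deriv_deriv (fun u => ?_) F _ _ _, fun hEW p hp => ?_⟩
  · have h := congrFun (iteratedDeriv_exp_const_mul 2 (-η)) u
    rwa [iteratedDeriv_succ, iteratedDeriv_one, neg_sq] at h
  have hF' : SmoothReprOn U F _ := ⟨hF, fun _ _ => rfl⟩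
  have hLHS q (hq : q ∈ U) := (hF'.EWred_iff ρ hU hq).1 (hEW q hq)
  have hzero {v : ℝ × ℝ × ℝ} (hv : v.1 = 0) := ewLin_partialDeriv_eq_zero η
    (φ := fun u => 4 * Real.exp (2 * ρ * u)) hU hF hLHS hp hv
  rw [hF'.linEWred_eq hU (hF'.pw hU) hp, hF'.linEWred_eq hU (hF'.pwt hU) hp]
  exact ⟨hzero rfl, hzero rfl⟩

end
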